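/- Let n be a positive integer, δ ∈ {0, 1}, A, B real with −1 < B ≤ 0 < A ≤ 1, and β ∈ ℂ \ {0} with |β| ≥ ((1 + e²)^{(3−n)/2}/(√2 e)^{1−n}) ((1 + A)/(1 + B) + ω₀^δ). If p ∈ ℋ satisfies p(z) ≠ 0 on 𝔻 and (p(z))^δ + β z p′(z)/(p(z))^n ≺ (1 + Az)/(1 + Bz), then p(z) ≺ 𝔅(z). -/

import Mathlib

open Complex

noncomputable section

/-- The open unit disk in the complex plane. -/
def unitDisk : Set ℂ := Metric.ball 0 1

/-- `f` is subordinate to `g` on the unit disk: there is an analytic Schwarz function `w`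
with `w 0 = 0`, `|w z| < 1` on the disk, and `f = g ∘ w` on the disk. -/
def Subord (f g : ℂ → ℂ) : Prop :=
  ∃ w : ℂ → ℂ, DifferentiableOn ℂ w unitDisk ∧ w 0 = 0 ∧
    (∀ z ∈ unitDisk, ‖w z‖ < 1) ∧ ∀ z ∈ unitDisk, f z = g (w z)

/-- The function `𝔅(z) = √(1 + tanh z)` (principal branch). -/
def bean (z : ℂ) : ℂ := (1 + Complex.tanh z) ^ ((1 : ℂ) / 2)

/-- `R₀ = e √(2/(e² - 1))`. -/
def R₀ : ℝ := Real.exp 1 * Real.sqrt (2 / (Real.exp 1 ^ 2 - 1))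

/-- `ω₀ = max_{θ ∈ [0, 2π)} |𝔅(e^{iθ})|`. -/
def ω₀ : ℝ :=
  sSup ((fun θ : ℝ => ‖bean (Complex.exp (θ * Complex.I))‖) '' Set.Ico 0 (2 * Real.pi))

/-!
On `𝔻` put `h := z p' / pⁿ` and `G := (1 + A)/(1 + B)`; the subordination gives
`‖β‖ ‖h‖ ≤ G + ‖p‖^δ`. As long as `‖p - 1‖ ≤ 1/5` on a disk of radius `r`, the Schwarz lemma
applied to `h` bounds `p'/pⁿ = h/z` by `(G + (6/5)^δ)/(‖β‖ r)` there, and the mean value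
theorem improves the bound to `‖p - 1‖ ≤ 3/20`, because `‖β‖` is large: `6/5` lies below `ω₀`,
below `√2 e/√(1 + e²)` and below `(3/20)(1 + e²)`. By continuity in `r` the bound `3/20` holds
on all of `𝔻`. A function with `‖p - 1‖ ≤ 1/5` is `𝔅 ∘ w` with `w = artanh (p² - 1)`, a Schwarz
function since `‖p² - 1‖ ≤ 11/25`.
-/

open Metric Set
open scoped Real

theorem norm_le_div_of_norm_mul_le {q : ℂ → ℂ} {r R : ℝ}
    (hq : DifferentiableOn ℂ q (ball 0 r)) (hR : ∀ z ∈ ball (0 : ℂ) r, ‖z * q z‖ ≤ R)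
    {z : ℂ} (hz : z ∈ ball 0 r) : ‖q z‖ ≤ R / r := by
  have hmaps : MapsTo (fun x => x * q x) (ball 0 r) (closedBall ((0 : ℂ) * q 0) R) := by
    intro x hx
    simpa using hR x hx
  have hdslope : dslope (fun x => x * q x) 0 z = q z := by
    rcases eq_or_ne z 0 with rfl | hz0
    · have hd : HasDerivAt (fun x => x * q x) (1 * q 0 + 0 * deriv q 0) 0 :=
        (hasDerivAt_id 0).mul
          (hq.differentiableAt (ball_mem_nhds 0 (pos_of_mem_ball hz))).hasDerivAt
      simpa using hd.deriv
    · simpa using dslope_sub_smul_of_ne q hz0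
  rw [← hdslope]
  exact norm_dslope_le_div_of_mapsTo_ball (differentiableOn_id.mul hq) hmaps hz

theorem norm_sub_le_of_norm_mul_deriv_div_pow_le {p : ℂ → ℂ} {n : ℕ} {r K M : ℝ}
    (hp : DifferentiableOn ℂ p (ball 0 r)) (hpne : ∀ z ∈ ball 0 r, p z ≠ 0)
    (hK : ∀ z ∈ ball (0 : ℂ) r, ‖z * deriv p z / p z ^ n‖ ≤ K)
    (hM : ∀ z ∈ ball 0 r, ‖p z‖ ≤ M) {z : ℂ} (hz : z ∈ ball 0 r) :
    ‖p z - p 0‖ ≤ K * M ^ n := by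
  have hr : 0 < r := pos_of_mem_ball hz
  have h0 : (0 : ℂ) ∈ ball 0 r := mem_ball_self hr
  have hK0 : 0 ≤ K := (norm_nonneg _).trans (hK 0 h0)
  have hM0 : 0 ≤ M := (norm_nonneg _).trans (hM 0 h0)
  have hq : DifferentiableOn ℂ (fun z => deriv p z / p z ^ n) (ball 0 r) :=
    ((hp.analyticOnNhd isOpen_ball).deriv.differentiableOn).div (hp.pow n)
      fun z hz => pow_ne_zero n (hpne z hz)
  have hderiv : ∀ y ∈ ball (0 : ℂ) r, ‖deriv p y‖ ≤ K / r * M ^ n := by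
    intro y hy
    have hpy : p y ^ n ≠ 0 := pow_ne_zero n (hpne y hy)
    calc ‖deriv p y‖ = ‖deriv p y / p y ^ n‖ * ‖p y‖ ^ n := by
          rw [norm_div, norm_pow, div_mul_cancel₀ _ (by simpa using hpy)]
      _ ≤ K / r * M ^ n := by
          gcongr
          · exact norm_le_div_of_norm_mul_le hq
              (fun y hy => by simpa [mul_div_assoc] using hK y hy) hy
          · exact hM y hy
  have hmvt := (convex_ball (0 : ℂ) r).norm_image_sub_le_of_norm_deriv_le
    (fun y hy => hp.differentiableAt (isOpen_ball.mem_nhds hy)) hderiv h0 hz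
  calc ‖p z - p 0‖ ≤ K / r * M ^ n * ‖z - 0‖ := hmvt
    _ ≤ K / r * M ^ n * r := by gcongr; simpa using (mem_ball_zero_iff.1 hz).le
    _ = K * M ^ n := by field_simp

theorem isClosed_setOf_forall_mem_ball {E : Type*} [PseudoMetricSpace E] (x : E) (P : E → Prop) :
    IsClosed {r : ℝ | ∀ z ∈ ball x r, P z} := by
  have : {r : ℝ | ∀ z ∈ ball x r, P z} = ⋂ z ∈ {z | ¬ P z}, Iic (dist z x) := by
    ext r
    simp only [mem_ofPred_eq, mem_ball, mem_iInter, mem_Iic]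
    exact forall_congr' fun z =>
      ⟨fun h hP => not_lt.1 fun hr => hP (h hr), fun h hr => by_contra fun hP => (h hP).not_gt hr⟩
  rw [this]
  exact isClosed_biInter fun _ _ => isClosed_Iic

theorem forall_mem_ball_le_of_bootstrap {E : Type*} [NormedAddCommGroup E] [NormedSpace ℝ E]
    [ProperSpace E] {f : E → ℝ} {x : E} {R a b : ℝ} (hab : a < b)
    (hf : ContinuousOn f (ball x R)) (hx : f x < b)
    (hboot : ∀ r ∈ Ioc 0 R, (∀ z ∈ ball x r, f z ≤ b) → ∀ z ∈ ball x r, f z ≤ a) :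
    ∀ z ∈ ball x R, f z ≤ a := by
  set s := {r : ℝ | ∀ z ∈ ball x r, f z ≤ a}
  have hstep : ∀ r ∈ s, 0 ≤ r → r < R → ∃ r' ∈ Ioc r R, r' ∈ s := by
    intro r hr hr0 hrR
    have hU : IsOpen (ball x R ∩ f ⁻¹' Iio b) := hf.isOpen_inter_preimage isOpen_ball isOpen_Iio
    have hsub : closedBall x r ⊆ ball x R ∩ f ⁻¹' Iio b := by
      intro z hz
      refine ⟨closedBall_subset_ball hrR hz, ?_⟩
      rcases hr0.eq_or_lt with rfl | hr0
      · rw [closedBall_zero, mem_singleton_iff] at hz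
        rwa [hz]
      · have hz' : z ∈ closure (ball x r) := by rwa [closure_ball x hr0.ne']
        have hfz : ContinuousWithinAt f (ball x r) z :=
          (hf.continuousAt (isOpen_ball.mem_nhds (closedBall_subset_ball hrR hz)))
            |>.continuousWithinAt
        exact (hfz.closure_le hz' continuousWithinAt_const hr).trans_lt hab
    obtain ⟨ε, hε, hεsub⟩ := (isCompact_closedBall x r).exists_thickening_subset_open hU hsub
    rw [thickening_closedBall hε hr0] at hεsub
    have hr' : min (ε + r) R ∈ Ioc r R := ⟨lt_min (by linarith) hrR, min_le_right _ _⟩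
    refine ⟨_, hr', hboot _ ⟨hr0.trans_lt hr'.1, hr'.2⟩ fun z hz => ?_⟩
    exact (hεsub (ball_subset_ball (min_le_left _ _) hz)).2.le
  intro z hz
  have hzR : dist z x < R := hz
  have hr₁ : (dist z x + R) / 2 ∈ s := by
    refine (isClosed_setOf_forall_mem_ball x _ |>.inter isClosed_Icc).mem_of_ge_of_forall_exists_gt
      (a := 0) (fun z hz => absurd hz (by simp)) (by linarith [dist_nonneg (x := z) (y := x)])
      fun r ⟨hr, hr0, hr₁⟩ => ?_
    obtain ⟨r', ⟨hrr', -⟩, hr'⟩ := hstep r hr hr0 (by linarith)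
    exact ⟨min r' ((dist z x + R) / 2), fun y hy => hr' y (ball_subset_ball (min_le_left _ _) hy),
      lt_min hrr' hr₁, min_le_right _ _⟩
  exact hr₁ z (by rw [mem_ball]; linarith)

theorem norm_div_one_add_mul_le {A B : ℝ} (hB : |B| < 1) {u : ℂ} (hu : ‖u‖ ≤ 1) :
    ‖(1 + A * u) / (1 + B * u)‖ ≤ (1 + |A|) / (1 - |B|) := by
  have hnum : ‖1 + A * u‖ ≤ 1 + |A| := by
    calc ‖1 + A * u‖ ≤ 1 + |A| * ‖u‖ := by
          simpa [norm_mul] using norm_add_le (1 : ℂ) (A * u)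
      _ ≤ 1 + |A| := by nlinarith [abs_nonneg A]
  have hden : 1 - |B| ≤ ‖1 + B * u‖ := by
    calc 1 - |B| ≤ 1 - |B| * ‖u‖ := by nlinarith [abs_nonneg B]
      _ ≤ ‖1 + B * u‖ := by
          simpa [norm_mul] using norm_sub_norm_le (1 : ℂ) (-(B * u))
  rw [norm_div]
  exact div_le_div₀ (by positivity) hnum (by linarith) hden

theorem norm_le_of_subord_div_one_add_mul {f : ℂ → ℂ} {A B : ℝ} (hA : 0 ≤ A) (hB₁ : -1 < B)
    (hB₀ : B ≤ 0) (h : Subord f fun z => (1 + (A : ℂ) * z) / (1 + (B : ℂ) * z)) :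
    ∀ z ∈ unitDisk, ‖f z‖ ≤ (1 + A) / (1 + B) := by
  obtain ⟨w, -, -, hw, hfw⟩ := h
  intro z hz
  have hB : |B| < 1 := abs_lt.2 ⟨hB₁, by linarith⟩
  simpa [hfw z hz, abs_of_nonneg hA, abs_of_nonpos hB₀] using
    norm_div_one_add_mul_le (A := A) hB (hw z hz).le

def Complex.artanh (z : ℂ) : ℂ := (log (1 + z) - log (1 - z)) / 2

theorem Complex.tanh_artanh {z : ℂ} (h₁ : 1 + z ≠ 0) (h₂ : 1 - z ≠ 0) : tanh (artanh z) = z := by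
  have hX : exp (artanh z) ^ 2 * (1 - z) = 1 + z := by
    rw [← exp_nat_mul, artanh, show ((2 : ℕ) : ℂ) * ((log (1 + z) - log (1 - z)) / 2)
      = log (1 + z) - log (1 - z) by push_cast; ring, exp_sub, exp_log h₁, exp_log h₂,
      div_mul_cancel₀ _ h₂]
  have hcosh : cosh (artanh z) ≠ 0 := by
    rw [cosh, exp_neg]
    intro h
    field_simp at h
    have h2 : (2 : ℂ) = 0 := by linear_combination (-1 : ℂ) * hX + (1 - z) * h
    exact two_ne_zero h2
  rw [tanh_eq_sinh_div_cosh, div_eq_iff hcosh, sinh, cosh, exp_neg]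
  field_simp
  linear_combination hX

theorem Complex.norm_artanh_le {z : ℂ} (hz : ‖z‖ ≤ 1 / 2) : ‖artanh z‖ ≤ 3 / 2 * ‖z‖ := by
  have h₁ := norm_log_one_add_half_le_self hz
  have h₂ := norm_log_one_add_half_le_self (z := -z) (by rwa [norm_neg])
  rw [norm_neg, ← sub_eq_add_neg] at h₂
  calc ‖artanh z‖ ≤ (‖log (1 + z)‖ + ‖log (1 - z)‖) / 2 := by
        rw [artanh, norm_div, Complex.norm_two]
        gcongr
        exact norm_sub_le _ _
    _ ≤ 3 / 2 * ‖z‖ := by linarith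

theorem Complex.differentiableAt_artanh {z : ℂ} (hz : ‖z‖ < 1) : DifferentiableAt ℂ artanh z := by
  have h₁ : 1 + z ∈ slitPlane := mem_slitPlane_of_norm_lt_one hz
  have h₂ : 1 - z ∈ slitPlane := by
    simpa [sub_eq_add_neg] using mem_slitPlane_of_norm_lt_one (z := -z) (by rwa [norm_neg])
  unfold artanh
  fun_prop (disch := assumption)

theorem Complex.cosh_ne_zero_of_norm_lt {z : ℂ} (hz : ‖z‖ < π / 2) : cosh z ≠ 0 := by
  rw [← cos_mul_I, Ne, cos_eq_zero_iff]
  rintro ⟨k, hk⟩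
  have hk1 : (1 : ℝ) ≤ |2 * (k : ℝ) + 1| := by
    have : (1 : ℤ) ≤ |2 * k + 1| := Int.one_le_abs (by omega)
    exact_mod_cast this
  have hnorm : ‖z‖ = |2 * (k : ℝ) + 1| * π / 2 := by
    calc ‖z‖ = ‖z * I‖ := by rw [norm_mul, norm_I, mul_one]
      _ = _ := by
        rw [hk, show (2 * (k : ℂ) + 1) * π / 2 = ((2 * k + 1) * π / 2 : ℝ) by push_cast; ring,
          norm_real, Real.norm_eq_abs, abs_div, abs_mul, abs_of_pos Real.pi_pos, abs_two]
  nlinarith [Real.pi_pos]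

theorem continuousOn_tanh_ball : ContinuousOn tanh (ball (0 : ℂ) (π / 2)) := by
  rw [show tanh = fun z => sinh z / cosh z from funext fun z => tanh_eq_sinh_div_cosh z]
  exact continuous_sinh.continuousOn.div continuous_cosh.continuousOn
    fun z hz => cosh_ne_zero_of_norm_lt (mem_ball_zero_iff.1 hz)

theorem bean_artanh_sq_sub_one {u : ℂ} (hu : 0 < u.re) (h : ‖u ^ 2 - 1‖ < 1) :
    bean (artanh (u ^ 2 - 1)) = u := by
  have h₁ := slitPlane_ne_zero (mem_slitPlane_of_norm_lt_one h)
  have h₂ := slitPlane_ne_zero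
    (mem_slitPlane_of_norm_lt_one (z := -(u ^ 2 - 1)) (by rwa [norm_neg]))
  rw [← sub_eq_add_neg] at h₂
  rw [bean, tanh_artanh h₁ h₂, add_sub_cancel, one_div]
  exact sq_cpow_two_inv hu

theorem norm_bean (z : ℂ) : ‖bean z‖ = √‖1 + tanh z‖ := by
  rw [bean, show (1 : ℂ) / 2 = ((1 / 2 : ℝ) : ℂ) by push_cast; rfl, norm_cpow_real,
    Real.sqrt_eq_rpow]

theorem bddAbove_norm_bean_circle :
    BddAbove ((fun θ : ℝ => ‖bean (exp (θ * I))‖) '' Ico 0 (2 * π)) := by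
  have hcont : ContinuousOn (fun z => ‖bean z‖) (sphere (0 : ℂ) 1) := by
    simp only [norm_bean]
    refine (continuousOn_const.add (continuousOn_tanh_ball.mono ?_)).norm.sqrt
    exact sphere_subset_closedBall.trans (closedBall_subset_ball (by linarith [Real.pi_gt_three]))
  refine ((isCompact_sphere 0 1).image_of_continuousOn hcont).bddAbove.mono ?_
  rintro _ ⟨θ, -, rfl⟩
  exact ⟨exp (θ * I), by simp, rfl⟩

theorem six_fifths_le_norm_bean_one : 6 / 5 ≤ ‖bean 1‖ := by
  have htanh : 11 / 25 ≤ Real.tanh 1 := by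
    have he : 2.7 < Real.exp 1 := by linarith [Real.exp_one_gt_d9]
    have hinv : Real.exp 1 * Real.exp (-1) = 1 := by rw [← Real.exp_add]; simp
    rw [Real.tanh_eq, le_div_iff₀ (by positivity)]
    nlinarith [Real.exp_pos (-1)]
  rw [norm_bean, ← ofReal_one, ← ofReal_tanh, ← ofReal_add, norm_real, Real.norm_eq_abs,
    abs_of_pos (by linarith), Real.le_sqrt (by norm_num) (by linarith)]
  linarith

theorem six_fifths_le_ω₀ : 6 / 5 ≤ ω₀ :=
  six_fifths_le_norm_bean_one.trans <| le_csSup bddAbove_norm_bean_circle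
    ⟨0, ⟨le_rfl, by positivity⟩, by simp⟩

theorem rpow_div_rpow_eq_mul_pow {x y : ℝ} (hx : 0 < x) (hy : 0 < y) {n : ℕ} (hn : 0 < n) :
    x ^ ((3 - (n : ℝ)) / 2) / y ^ (1 - (n : ℝ)) = x * (y / √x) ^ (n - 1) := by
  obtain ⟨m, rfl⟩ : ∃ m, n = m + 1 := ⟨n - 1, by omega⟩
  have h3 : (3 - ((m + 1 : ℕ) : ℝ)) / 2 = 1 + 1 / 2 * -(m : ℝ) := by push_cast; ring
  have h1 : 1 - ((m + 1 : ℕ) : ℝ) = -(m : ℝ) := by push_cast; ring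
  rw [h3, h1, Real.rpow_add hx, Real.rpow_one, Real.rpow_mul hx.le, ← Real.sqrt_eq_rpow,
    Real.rpow_neg (Real.sqrt_nonneg x), Real.rpow_neg hy.le, Real.rpow_natCast, Real.rpow_natCast,
    Nat.add_sub_cancel, div_pow]
  field_simp

theorem six_fifths_pow_le (n : ℕ) (hn : 0 < n) :
    (6 / 5 : ℝ) ^ n ≤ 3 / 20 * ((1 + Real.exp 1 ^ 2) ^ ((3 - (n : ℝ)) / 2) /
      (√2 * Real.exp 1) ^ (1 - (n : ℝ))) := by
  have he : 2.7 < Real.exp 1 := by linarith [Real.exp_one_gt_d9]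
  have h1e : 0 < 1 + Real.exp 1 ^ 2 := by positivity
  have hq : 6 / 5 ≤ √2 * Real.exp 1 / √(1 + Real.exp 1 ^ 2) := by
    rw [le_div_iff₀ (by positivity), ← pow_le_pow_iff_left₀ (by positivity) (by positivity)
      two_ne_zero, mul_pow, mul_pow, Real.sq_sqrt h1e.le, Real.sq_sqrt zero_le_two]
    nlinarith
  rw [rpow_div_rpow_eq_mul_pow h1e (by positivity) hn]
  calc (6 / 5 : ℝ) ^ n = 6 / 5 * (6 / 5) ^ (n - 1) := by
        rw [← pow_succ', Nat.sub_add_cancel hn]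
    _ ≤ 3 / 20 * (1 + Real.exp 1 ^ 2) * (√2 * Real.exp 1 / √(1 + Real.exp 1 ^ 2)) ^ (n - 1) := by
        gcongr
        nlinarith
    _ = _ := by ring

theorem add_six_fifths_pow_mul_le {n δ : ℕ} (hn : 0 < n) {G β : ℝ} (hG : 0 ≤ G)
    (hβ : (1 + Real.exp 1 ^ 2) ^ ((3 - (n : ℝ)) / 2) / (√2 * Real.exp 1) ^ (1 - (n : ℝ)) *
      (G + ω₀ ^ δ) ≤ β) :
    (G + (6 / 5) ^ δ) * (6 / 5) ^ n ≤ 3 / 20 * β := by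
  have hω : 0 ≤ ω₀ := by linarith [six_fifths_le_ω₀]
  calc (G + (6 / 5) ^ δ) * (6 / 5) ^ n
      ≤ (G + ω₀ ^ δ) * (3 / 20 * ((1 + Real.exp 1 ^ 2) ^ ((3 - (n : ℝ)) / 2) /
          (√2 * Real.exp 1) ^ (1 - (n : ℝ)))) := by
        gcongr
        · exact six_fifths_le_ω₀
        · exact six_fifths_pow_le n hn
    _ ≤ 3 / 20 * β := by linarith

theorem norm_sub_one_le_of_differential_bound {p : ℂ → ℂ} {n δ : ℕ} {a b G β : ℝ}
    (hab : a < b) (hb : 0 < b)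
    (hp : DifferentiableOn ℂ p unitDisk) (hp0 : p 0 = 1) (hpne : ∀ z ∈ unitDisk, p z ≠ 0)
    (hβ : 0 < β) (hbound : ∀ z ∈ unitDisk, β * ‖z * deriv p z / p z ^ n‖ ≤ G + ‖p z‖ ^ δ)
    (hnum : (G + (1 + b) ^ δ) * (1 + b) ^ n ≤ a * β) :
    ∀ z ∈ unitDisk, ‖p z - 1‖ ≤ a := by
  refine forall_mem_ball_le_of_bootstrap hab (hp.continuousOn.sub continuousOn_const).norm
    (by simpa [hp0] using hb) fun r hr hrb z hz => ?_
  have hsub : ball 0 r ⊆ unitDisk := ball_subset_ball hr.2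
  have hM : ∀ y ∈ ball (0 : ℂ) r, ‖p y‖ ≤ 1 + b := fun y hy => by
    simpa using (norm_le_norm_add_norm_sub' (p y) 1).trans (by simpa using hrb y hy)
  have hK : ∀ y ∈ ball (0 : ℂ) r, ‖y * deriv p y / p y ^ n‖ ≤ (G + (1 + b) ^ δ) / β := by
    intro y hy
    rw [le_div_iff₀ hβ, mul_comm]
    exact (hbound y (hsub hy)).trans (by gcongr; exact hM y hy)
  calc ‖p z - 1‖ ≤ (G + (1 + b) ^ δ) / β * (1 + b) ^ n := by
        simpa [hp0] using norm_sub_le_of_norm_mul_deriv_div_pow_le (hp.mono hsub)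
          (fun y hy => hpne y (hsub hy)) hK hM hz
    _ ≤ a := by rw [div_mul_eq_mul_div, div_le_iff₀ hβ]; exact hnum

theorem subord_bean_of_norm_sub_one_le {p : ℂ → ℂ} (hp : DifferentiableOn ℂ p unitDisk)
    (hp0 : p 0 = 1) (h : ∀ z ∈ unitDisk, ‖p z - 1‖ ≤ 1 / 5) : Subord p bean := by
  have hsq : ∀ z ∈ unitDisk, ‖p z ^ 2 - 1‖ ≤ 11 / 25 := by
    intro z hz
    calc ‖p z ^ 2 - 1‖ = ‖p z - 1‖ * ‖p z - 1 + 2‖ := by rw [← norm_mul]; ring_nf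
      _ ≤ 1 / 5 * (1 / 5 + 2) := by
          gcongr
          · exact h z hz
          · exact (norm_add_le _ _).trans (by simpa using h z hz)
      _ = 11 / 25 := by norm_num
  have hre : ∀ z ∈ unitDisk, 0 < (p z).re := by
    intro z hz
    have := (abs_re_le_norm (p z - 1)).trans (h z hz)
    rw [sub_re, one_re, abs_le] at this
    linarith
  refine ⟨fun z => artanh (p z ^ 2 - 1), fun z hz => ?_, by simp [hp0, artanh], fun z hz => ?_,
    fun z hz => (bean_artanh_sq_sub_one (hre z hz) ((hsq z hz).trans_lt (by norm_num))).symm⟩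
  · exact ((differentiableAt_artanh ((hsq z hz).trans_lt (by norm_num))).comp z
      ((hp.differentiableAt (isOpen_ball.mem_nhds hz)).pow 2 |>.sub_const 1)).differentiableWithinAt
  · calc ‖artanh (p z ^ 2 - 1)‖ ≤ 3 / 2 * ‖p z ^ 2 - 1‖ :=
          norm_artanh_le ((hsq z hz).trans (by norm_num))
      _ < 1 := by linarith [hsq z hz]

theorem stmt_8_general (n : ℕ) (hn : 0 < n) (δ : ℕ)
    (A B : ℝ) (hB1 : -1 < B) (hB0 : B ≤ 0) (hA0 : 0 < A)
    (β : ℂ)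
    (hβ : (1 + Real.exp 1 ^ 2) ^ ((3 - (n : ℝ)) / 2) /
          (Real.sqrt 2 * Real.exp 1) ^ (1 - (n : ℝ)) *
        ((1 + A) / (1 + B) + ω₀ ^ δ) ≤ ‖β‖)
    (p : ℂ → ℂ) (hp : DifferentiableOn ℂ p unitDisk) (hp0 : p 0 = 1)
    (hpne : ∀ z ∈ unitDisk, p z ≠ 0)
    (hsub : Subord (fun z => p z ^ δ + β * (z * deriv p z) / p z ^ n)
        (fun z => (1 + (A : ℂ) * z) / (1 + (B : ℂ) * z))) :
    Subord p bean := by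
  set G := (1 + A) / (1 + B)
  have hG : 0 ≤ G := div_nonneg (by linarith) (by linarith)
  have hnum := add_six_fifths_pow_mul_le hn hG hβ
  have hβpos : 0 < ‖β‖ := by
    have : 0 < (G + (6 / 5) ^ δ) * (6 / 5) ^ n := by positivity
    linarith
  have hbound : ∀ z ∈ unitDisk, ‖β‖ * ‖z * deriv p z / p z ^ n‖ ≤ G + ‖p z‖ ^ δ := by
    intro z hz
    calc ‖β‖ * ‖z * deriv p z / p z ^ n‖
        = ‖(p z ^ δ + β * (z * deriv p z) / p z ^ n) - p z ^ δ‖ := by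
          rw [← norm_mul, add_sub_cancel_left, ← mul_div_assoc]
      _ ≤ G + ‖p z‖ ^ δ := (norm_sub_le _ _).trans (by
          rw [norm_pow]; gcongr; exact norm_le_of_subord_div_one_add_mul hA0.le hB1 hB0 hsub z hz)
  have hsmall := norm_sub_one_le_of_differential_bound (a := 3 / 20) (b := 1 / 5) (by norm_num)
    (by norm_num) hp hp0 hpne hβpos hbound (by norm_num; exact hnum)
  exact subord_bean_of_norm_sub_one_le hp hp0 fun z hz => (hsmall z hz).trans (by norm_num)

theorem stmt_8 (n : ℕ) (hn : 0 < n) (δ : ℕ) (hδ : δ = 0 ∨ δ = 1)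
    (A B : ℝ) (hB1 : -1 < B) (hB0 : B ≤ 0) (hA0 : 0 < A) (hA1 : A ≤ 1)
    (β : ℂ) (hβ0 : β ≠ 0)
    (hβ : (1 + Real.exp 1 ^ 2) ^ ((3 - (n : ℝ)) / 2) /
          (Real.sqrt 2 * Real.exp 1) ^ (1 - (n : ℝ)) *
        ((1 + A) / (1 + B) + ω₀ ^ δ) ≤ ‖β‖)
    (p : ℂ → ℂ) (hp : DifferentiableOn ℂ p unitDisk) (hp0 : p 0 = 1)
    (hpne : ∀ z ∈ unitDisk, p z ≠ 0)
    (hsub : Subord (fun z => p z ^ δ + β * (z * deriv p z) / p z ^ n)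
        (fun z => (1 + (A : ℂ) * z) / (1 + (B : ℂ) * z))) :
    Subord p bean :=
  stmt_8_general n hn δ A B hB1 hB0 hA0 β hβ p hp hp0 hpne hsub
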